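/- arXiv:1106.2218 — 5 statements merged into one kernel-verified Lean document; each statement's English description precedes it below -/
import Mathlib

section
/- Let L be a semiexact reflection on T with unit l : Id → L. Since the class of L-local objects is closed under desuspension, for each object X there is a unique morphism ν_X : LX → Σ⁻¹LΣX with ν_X ∘ l_X = Σ⁻¹l_{ΣX}, and hence a natural morphism Σν_X : ΣLX → LΣX with Σν_X ∘ Σl_X = l_{ΣX}. If, for a given object X, the object ΣLX is L-local, then Σν_X : ΣLX → LΣX is an isomorphism. -/
open CategoryTheory Category Limits Pretriangulated

universe v u

namespace Paper

section General

variable {T : Type u} [Category.{v} T]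

/-- A full subcategory (given by its class of objects) is closed under retracts. -/
def ClosedUnderRetracts (S : Set T) : Prop :=
  ∀ ⦃A B : T⦄, A ∈ S → (∃ (i : B ⟶ A) (r : A ⟶ B), i ≫ r = 𝟙 B) → B ∈ S

/-- A full subcategory is weakly reflective: every object admits a weak reflection into it. -/
def WeaklyReflective (S : Set T) : Prop :=
  ∀ X : T, ∃ (X' : T) (l : X ⟶ X'), X' ∈ S ∧
    ∀ ⦃Y : T⦄, Y ∈ S → ∀ f : X ⟶ Y, ∃ g : X' ⟶ Y, l ≫ g = f

/-- A full subcategory is weakly coreflective. -/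
def WeaklyCoreflective (S : Set T) : Prop :=
  ∀ X : T, ∃ (X' : T) (c : X' ⟶ X), X' ∈ S ∧
    ∀ ⦃Y : T⦄, Y ∈ S → ∀ f : Y ⟶ X, ∃ g : Y ⟶ X', g ≫ c = f

/-- A full subcategory is reflective: the inclusion has a left adjoint. -/
def ReflectiveSet (S : Set T) : Prop :=
  (ObjectProperty.ι (fun X => X ∈ S)).IsRightAdjoint

/-- A full subcategory is coreflective: the inclusion has a right adjoint. -/
def CoreflectiveSet (S : Set T) : Prop :=
  (ObjectProperty.ι (fun X => X ∈ S)).IsLeftAdjoint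

end General

/-- The data of an endofunctor together with a natural transformation from the identity
(a candidate reflection with its unit). -/
structure ReflectionData (T : Type u) [Category.{v} T] where
  L : T ⥤ T
  unit : 𝟭 T ⟶ L

/-- The data of an endofunctor together with a natural transformation to the identity
(a candidate coreflection with its counit). -/
structure CoreflectionData (T : Type u) [Category.{v} T] where
  C : T ⥤ T
  counit : C ⟶ 𝟭 T

section ReflData

variable {T : Type u} [Category.{v} T]

/-- The `L`-local objects: the essential image of `L`. -/
def ReflectionData.localObjects (R : ReflectionData T) : Set T := R.L.essImage

/-- `(L, l)` is a reflection: every morphism to an `L`-local object factors uniquely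
through the unit. -/
def ReflectionData.IsReflection (R : ReflectionData T) : Prop :=
  ∀ ⦃X W : T⦄, W ∈ R.localObjects → ∀ f : X ⟶ W,
    ∃! g : R.L.obj X ⟶ W, R.unit.app X ≫ g = f

/-- The `C`-colocal objects: the essential image of `C`. -/
def CoreflectionData.colocalObjects (Q : CoreflectionData T) : Set T := Q.C.essImage

/-- `(C, c)` is a coreflection: every morphism from a `C`-colocal object factors uniquely
through the counit. -/
def CoreflectionData.IsCoreflection (Q : CoreflectionData T) : Prop :=
  ∀ ⦃X W : T⦄, W ∈ Q.colocalObjects → ∀ f : W ⟶ X,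
    ∃! g : W ⟶ Q.C.obj X, g ≫ Q.counit.app X = f

end ReflData

section Triangulated

variable {T : Type u} [Category.{v} T] [HasZeroObject T] [Preadditive T] [HasShift T ℤ]
  [∀ n : ℤ, (shiftFunctor T n).Additive] [Pretriangulated T]

/-- Closed under fibres: the first vertex of a distinguished triangle whose second and third
vertices lie in `S` lies in `S`. -/
def ClosedUnderFibres (S : Set T) : Prop :=
  ∀ ⦃X Y Z : T⦄ (u : X ⟶ Y) (v : Y ⟶ Z) (w : Z ⟶ X⟦(1:ℤ)⟧),
    (Triangle.mk u v w ∈ distTriang T) → Y ∈ S → Z ∈ S → X ∈ S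

/-- Closed under cofibres. -/
def ClosedUnderCofibres (S : Set T) : Prop :=
  ∀ ⦃X Y Z : T⦄ (u : X ⟶ Y) (v : Y ⟶ Z) (w : Z ⟶ X⟦(1:ℤ)⟧),
    (Triangle.mk u v w ∈ distTriang T) → X ∈ S → Y ∈ S → Z ∈ S

/-- Closed under extensions. -/
def ClosedUnderExtensions (S : Set T) : Prop :=
  ∀ ⦃X Y Z : T⦄ (u : X ⟶ Y) (v : Y ⟶ Z) (w : Z ⟶ X⟦(1:ℤ)⟧),
    (Triangle.mk u v w ∈ distTriang T) → X ∈ S → Z ∈ S → Y ∈ S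

/-- `^⊥D`: objects `X` with `T(X, ΣᵏD) = 0` for all `D ∈ D` and all integers `k`. -/
def leftOrth (D : Set T) : Set T :=
  {X | ∀ ⦃E : T⦄, E ∈ D → ∀ k : ℤ, ∀ f : X ⟶ E⟦k⟧, f = 0}

/-- `D^⊥`: objects `Y` with `T(ΣᵏD, Y) = 0` for all `D ∈ D` and all integers `k`. -/
def rightOrth (D : Set T) : Set T :=
  {Y | ∀ ⦃E : T⦄, E ∈ D → ∀ k : ℤ, ∀ f : E⟦k⟧ ⟶ Y, f = 0}

/-- `⊾D`: objects `X` with `T(X, ΣᵏD) = 0` for all `D ∈ D` and all `k ≤ 0`. -/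
def leftSemiOrth (D : Set T) : Set T :=
  {X | ∀ ⦃E : T⦄, E ∈ D → ∀ k : ℤ, k ≤ 0 → ∀ f : X ⟶ E⟦k⟧, f = 0}

/-- `D⊿`: objects `Y` with `T(ΣᵏD, Y) = 0` for all `D ∈ D` and all `k ≥ 0`. -/
def rightSemiOrth (D : Set T) : Set T :=
  {Y | ∀ ⦃E : T⦄, E ∈ D → ∀ k : ℤ, 0 ≤ k → ∀ f : E⟦k⟧ ⟶ Y, f = 0}

section WithLimits

variable [HasProducts.{v} T] [HasCoproducts.{v} T]

/-- Closed under all (small) products. -/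
def ClosedUnderProducts (S : Set T) : Prop :=
  ∀ ⦃ι : Type v⦄ (f : ι → T), (∀ i, f i ∈ S) → (∏ᶜ f) ∈ S

/-- Closed under all (small) coproducts. -/
def ClosedUnderCoproducts (S : Set T) : Prop :=
  ∀ ⦃ι : Type v⦄ (f : ι → T), (∀ i, f i ∈ S) → (∐ f) ∈ S

/-- Semilocalizing: closed under coproducts, cofibres and extensions. -/
def IsSemilocalizing (S : Set T) : Prop :=
  ClosedUnderCoproducts S ∧ ClosedUnderCofibres S ∧ ClosedUnderExtensions S

/-- Semicolocalizing: closed under products, fibres and extensions. -/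
def IsSemicolocalizing (S : Set T) : Prop :=
  ClosedUnderProducts S ∧ ClosedUnderFibres S ∧ ClosedUnderExtensions S

/-- Localizing: closed under coproducts, fibres, cofibres and extensions. -/
def IsLocalizing (S : Set T) : Prop :=
  ClosedUnderCoproducts S ∧ ClosedUnderFibres S ∧ ClosedUnderCofibres S ∧
    ClosedUnderExtensions S

/-- Colocalizing: closed under products, fibres, cofibres and extensions. -/
def IsColocalizing (S : Set T) : Prop :=
  ClosedUnderProducts S ∧ ClosedUnderFibres S ∧ ClosedUnderCofibres S ∧
    ClosedUnderExtensions S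

/-- The smallest semilocalizing subcategory containing `D`. -/
def semiloc (D : Set T) : Set T := ⋂₀ {S : Set T | IsSemilocalizing S ∧ D ⊆ S}

/-- The smallest semicolocalizing subcategory containing `D`. -/
def semicoloc (D : Set T) : Set T := ⋂₀ {S : Set T | IsSemicolocalizing S ∧ D ⊆ S}

/-- The smallest localizing subcategory containing `D`. -/
def loc (D : Set T) : Set T := ⋂₀ {S : Set T | IsLocalizing S ∧ D ⊆ S}

/-- The smallest colocalizing subcategory containing `D`. -/
def coloc (D : Set T) : Set T := ⋂₀ {S : Set T | IsColocalizing S ∧ D ⊆ S}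

end WithLimits

end Triangulated

/-!
Shifting is an equivalence, and the local objects are closed under desuspension: `V⟦-1⟧` is the
fibre of `0 ⟶ V`, and `0` is the fibre of an identity. So a morphism `ΣX ⟶ W` into a local
object is the same as a morphism `X ⟶ Σ⁻¹W` into a local object, which makes `Σl_X` a
reflection of `ΣX` into the local objects, just like `l_{ΣX}`. When `ΣLX` is local, `Σν_X`
compares two reflections of the same object and is therefore an isomorphism.
-/

section ReflectionArrows

variable {T : Type u} [Category.{v} T]

def IsReflectionArrow (S : Set T) {A B : T} (u : A ⟶ B) : Prop :=
  ∀ ⦃W : T⦄, W ∈ S → ∀ f : A ⟶ W, ∃! g : B ⟶ W, u ≫ g = f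

namespace IsReflectionArrow

variable {S : Set T} {A B B' : T} {u : A ⟶ B} {u' : A ⟶ B'}

lemma hom_ext (hu : IsReflectionArrow S u) {W : T} (hW : W ∈ S) {g₁ g₂ : B ⟶ W}
    (h : u ≫ g₁ = u ≫ g₂) : g₁ = g₂ :=
  (hu hW (u ≫ g₂)).unique h rfl

lemma isIso_of_comp_eq (hu : IsReflectionArrow S u) (hu' : IsReflectionArrow S u')
    (hB : B ∈ S) (hB' : B' ∈ S) {ν : B ⟶ B'} (hν : u ≫ ν = u') : IsIso ν := by
  obtain ⟨μ, hμ, -⟩ := hu' hB u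
  refine ⟨μ, hu.hom_ext hB ?_, hu'.hom_ext hB' ?_⟩
  · rw [reassoc_of% hν, hμ, comp_id]
  · rw [reassoc_of% hμ, hν, comp_id]

end IsReflectionArrow

lemma Adjunction.isReflectionArrow_map_iff {D : Type*} [Category D] {F : T ⥤ D} {G : D ⥤ T}
    (adj : F ⊣ G) {S : Set D} {A B : T} (u : A ⟶ B) :
    IsReflectionArrow S (F.map u) ↔ ∀ ⦃W : D⦄, W ∈ S → ∀ f : A ⟶ G.obj W,
      ∃! g : B ⟶ G.obj W, u ≫ g = f := by
  refine forall₂_congr fun W _ => (adj.homEquiv A W).forall_congr fun f => ?_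
  exact (adj.homEquiv B W).existsUnique_congr fun g => by
    rw [← adj.homEquiv_naturality_left, (adj.homEquiv A W).apply_eq_iff_eq]

variable [HasZeroObject T] [Preadditive T] [HasShift T ℤ]
  [∀ n : ℤ, (shiftFunctor T n).Additive] [Pretriangulated T]

open ZeroObject in
lemma zero_mem_essImage_of_closedUnderFibres {D : Type*} [Category D] {F : D ⥤ T}
    (hF : ClosedUnderFibres F.essImage) {W : T} (hW : F.essImage W) :
    F.essImage (0 : T) := by
  have h := hF _ _ _ (inv_rot_of_distTriang _ (contractible_distinguished W)) hW hW
  exact Functor.essImage.ofIso ((shiftFunctor T (-1 : ℤ)).map_isZero (isZero_zero T)).isoZero h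

lemma shift_neg_one_mem_essImage_of_closedUnderFibres {D : Type*} [Category D] {F : D ⥤ T}
    (hF : ClosedUnderFibres F.essImage) {V : T} (hV : F.essImage V) :
    F.essImage (V⟦(-1 : ℤ)⟧) :=
  hF _ _ _ (rot_of_distTriang _ (contractible_distinguished _))
    (zero_mem_essImage_of_closedUnderFibres hF hV)
    (Functor.essImage.ofIso ((shiftEquiv T (1 : ℤ)).counitIso.symm.app V) hV)

lemma IsReflectionArrow.shift_of_closedUnderFibres (R : ReflectionData T)
    (hrefl : R.IsReflection) (hfib : ClosedUnderFibres R.localObjects) (X : T) :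
    IsReflectionArrow R.localObjects ((R.unit.app X)⟦(1 : ℤ)⟧') :=
  (Adjunction.isReflectionArrow_map_iff (shiftEquiv T (1 : ℤ)).toAdjunction _).2 fun _ hW =>
    hrefl (shift_neg_one_mem_essImage_of_closedUnderFibres hfib hW)

end ReflectionArrows

section Statements

variable {T : Type u} [Category.{v} T] [HasZeroObject T] [Preadditive T] [HasShift T ℤ]
  [∀ n : ℤ, (shiftFunctor T n).Additive] [Pretriangulated T]
  [HasProducts.{v} T] [HasCoproducts.{v} T]

/-- For a semiexact reflection `L` with unit `l`, for each `X` there is a unique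
morphism `Σν_X : ΣLX ⟶ LΣX` with `Σν_X ∘ Σl_X = l_{ΣX}`, and if `ΣLX` is `L`-local then
`Σν_X` is an isomorphism. -/
theorem statement0 (R : ReflectionData T) (hrefl : R.IsReflection)
    (hsemi : IsSemicolocalizing R.localObjects) (X : T) :
    (∃! ν : (R.L.obj X)⟦(1:ℤ)⟧ ⟶ R.L.obj (X⟦(1:ℤ)⟧),
        (R.unit.app X)⟦(1:ℤ)⟧' ≫ ν = R.unit.app (X⟦(1:ℤ)⟧)) ∧
    (∀ ν : (R.L.obj X)⟦(1:ℤ)⟧ ⟶ R.L.obj (X⟦(1:ℤ)⟧),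
        (R.unit.app X)⟦(1:ℤ)⟧' ≫ ν = R.unit.app (X⟦(1:ℤ)⟧) →
        (R.L.obj X)⟦(1:ℤ)⟧ ∈ R.localObjects → IsIso ν) := by
  have hshift := IsReflectionArrow.shift_of_closedUnderFibres R hrefl hsemi.2.1 X
  have hl : IsReflectionArrow R.localObjects (R.unit.app (X⟦(1 : ℤ)⟧)) := @hrefl _
  have hLX : R.L.obj (X⟦(1 : ℤ)⟧) ∈ R.localObjects := R.L.obj_mem_essImage _
  exact ⟨hshift hLX _, fun ν hν hlocal => hshift.isIso_of_comp_eq hl hlocal hLX hν⟩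

end Statements

end Paper
end

section
/- Let L be a semiexact reflection on a triangulated category T. Then the following assertions are equivalent: (i) L is exact (the class of L-local objects is colocalizing); (ii) the class of L-local objects is closed under Σ; (iii) ΣLX ≅ LΣX for every object X; (iv) the canonical morphism Σν_X : ΣLX → LΣX (characterized by Σν_X ∘ Σl_X = l_{ΣX}) is an isomorphism for every X; (v) L preserves all distinguished triangles, i.e., for every distinguished triangle X →u Y →v Z →w ΣX, the triangle LX →Lu LY →Lv LZ → ΣLX (with third map Σν_X⁻¹ ∘ Lw) is distinguished. -/
open CategoryTheory Category Limits Pretriangulated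

universe v u

namespace Paper

/-!
Write `S` for the class of `L`-local objects and call `f` an `L`-equivalence if precomposition
with `f` is bijective on morphisms into every object of `S`; the units `l_X` are
`L`-equivalences. Since `S` is closed under fibres and contains `0`, it is closed under `Σ⁻¹`, so
by the adjunction `Σ ⊣ Σ⁻¹` the maps `Σl_X` are `L`-equivalences as well. If moreover
`ΣS ⊆ S`, then `Σν_X` is an `L`-equivalence between objects of `S`, hence an isomorphism. For a
distinguished triangle `X → Y → Z → ΣX`, complete `Lu` to a distinguished triangle
`LX → LY → W → ΣLX`: `W` lies in `S` as an extension of `ΣLX` by `LY`, and the five lemma for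
`Hom(-, E)`, `E ∈ S`, shows that the induced map `Z → W` is an `L`-equivalence, so `W ≅ LZ`.
-/

open ZeroObject

section FiveLemma

variable {T : Type u} [Category.{v} T] [HasZeroObject T] [Preadditive T] [HasShift T ℤ]
  [∀ n : ℤ, (shiftFunctor T n).Additive] [Pretriangulated T]
  {T₁ T₂ : Triangle T} (h₁ : T₁ ∈ distTriang T) (h₂ : T₂ ∈ distTriang T) (φ : T₁ ⟶ T₂) {W : T}
include h₁ h₂

lemma precomp_hom₃_injective
    (hb : Function.Injective fun g : T₂.obj₂ ⟶ W => φ.hom₂ ≫ g)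
    (ha' : Function.Injective fun g : T₂.obj₁⟦(1 : ℤ)⟧ ⟶ W => φ.hom₁⟦(1 : ℤ)⟧' ≫ g)
    (hb' : Function.Surjective fun g : T₂.obj₂⟦(1 : ℤ)⟧ ⟶ W => φ.hom₂⟦(1 : ℤ)⟧' ≫ g) :
    Function.Injective fun g : T₂.obj₃ ⟶ W => φ.hom₃ ≫ g := by
  refine (injective_iff_map_eq_zero (Preadditive.leftComp W φ.hom₃)).2 fun g hg => ?_
  change φ.hom₃ ≫ g = 0 at hg
  have hv : T₂.mor₂ ≫ g = 0 := hb (by simp [← φ.comm₂_assoc, hg])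
  obtain ⟨h, rfl⟩ := Triangle.yoneda_exact₃ _ h₂ g hv
  have hh : T₁.mor₃ ≫ φ.hom₁⟦(1 : ℤ)⟧' ≫ h = 0 := by rw [φ.comm₃_assoc, hg]
  obtain ⟨k, hk⟩ :
      ∃ k : T₁.obj₂⟦(1 : ℤ)⟧ ⟶ W, φ.hom₁⟦(1 : ℤ)⟧' ≫ h = (-T₁.mor₁⟦(1 : ℤ)⟧') ≫ k :=
    Triangle.yoneda_exact₃ _ (rot_of_distTriang _ h₁) _ hh
  obtain ⟨k, rfl⟩ := hb' k
  have hcomm :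
      φ.hom₁⟦(1 : ℤ)⟧' ≫ T₂.mor₁⟦(1 : ℤ)⟧' = T₁.mor₁⟦(1 : ℤ)⟧' ≫ φ.hom₂⟦(1 : ℤ)⟧' := by
    simp only [← Functor.map_comp, φ.comm₁]
  have : h = -(T₂.mor₁⟦(1 : ℤ)⟧' ≫ k) := ha' (by simp [hk, reassoc_of% hcomm])
  simp [this, comp_distTriang_mor_zero₃₁_assoc _ h₂]

lemma precomp_hom₃_surjective
    (ha : Function.Injective fun g : T₂.obj₁ ⟶ W => φ.hom₁ ≫ g)
    (hb : Function.Surjective fun g : T₂.obj₂ ⟶ W => φ.hom₂ ≫ g)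
    (ha' : Function.Surjective fun g : T₂.obj₁⟦(1 : ℤ)⟧ ⟶ W => φ.hom₁⟦(1 : ℤ)⟧' ≫ g) :
    Function.Surjective fun g : T₂.obj₃ ⟶ W => φ.hom₃ ≫ g := by
  intro f
  obtain ⟨g, hg : φ.hom₂ ≫ g = T₁.mor₂ ≫ f⟩ := hb (T₁.mor₂ ≫ f)
  have hu : T₂.mor₁ ≫ g = 0 :=
    ha (by simp [← φ.comm₁_assoc, hg, comp_distTriang_mor_zero₁₂_assoc _ h₁])
  obtain ⟨g, rfl⟩ := Triangle.yoneda_exact₂ _ h₂ g hu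
  have hd : T₁.mor₂ ≫ (f - φ.hom₃ ≫ g) = 0 := by simp [hg]
  obtain ⟨e, he⟩ := Triangle.yoneda_exact₃ _ h₁ _ hd
  obtain ⟨e, rfl⟩ := ha' e
  refine ⟨g + T₂.mor₃ ≫ e, ?_⟩
  simp [← φ.comm₃_assoc, ← he]

lemma isLocal_hom₃ (P : ObjectProperty T) (ha : P.isLocal φ.hom₁) (hb : P.isLocal φ.hom₂)
    (ha' : P.isLocal (φ.hom₁⟦(1 : ℤ)⟧')) (hb' : P.isLocal (φ.hom₂⟦(1 : ℤ)⟧')) :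
    P.isLocal φ.hom₃ := fun W hW =>
  ⟨precomp_hom₃_injective h₁ h₂ φ (hb W hW).1 (ha' W hW).1 (hb' W hW).2,
    precomp_hom₃_surjective h₁ h₂ φ (ha W hW).1 (hb W hW).2 (ha' W hW).2⟩

end FiveLemma

lemma isLocal_map_of_adjunction {C D : Type*} [Category C] [Category D] {F : C ⥤ D} {G : D ⥤ C}
    (adj : F ⊣ G) {P : ObjectProperty C} {Q : ObjectProperty D} (hG : ∀ W, Q W → P (G.obj W))
    {X Y : C} {f : X ⟶ Y} (hf : P.isLocal f) : Q.isLocal (F.map f) := by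
  intro W hW
  have : (fun g : F.obj Y ⟶ W => F.map f ≫ g) =
      (adj.homEquiv X W).symm ∘ (fun g => f ≫ g) ∘ adj.homEquiv Y W := by
    ext g
    simp [adj.homEquiv_naturality_left_symm]
  rw [this]
  exact (adj.homEquiv X W).symm.bijective.comp
    ((hf _ (hG W hW)).comp (adj.homEquiv Y W).bijective)

lemma IsSemicolocalizing.isColocalizing_iff {T : Type u} [Category.{v} T] [HasZeroObject T]
    [Preadditive T] [HasShift T ℤ] [∀ n : ℤ, (shiftFunctor T n).Additive] [Pretriangulated T]
    [HasProducts.{v} T] {S : Set T} (hS : IsSemicolocalizing S)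
    (h0 : (0 : T) ∈ S) :
    IsColocalizing S ↔ ∀ ⦃X : T⦄, X ∈ S → X⟦(1 : ℤ)⟧ ∈ S := by
  refine ⟨fun hS' X hX => ?_, fun hshift => ⟨hS.1, hS.2.1, ?_, hS.2.2⟩⟩
  · exact hS'.2.2.1 _ _ _ (rot_of_distTriang _ (contractible_distinguished X)) hX h0
  · intro X Y Z u v w hT hX hY
    exact hS.2.2 _ _ _ (rot_of_distTriang _ hT) hY (hshift hX)

namespace ReflectionData

section Category

variable {T : Type u} [Category.{v} T] (R : ReflectionData T)

abbrev localEquivalences : MorphismProperty T := ObjectProperty.isLocal (· ∈ R.localObjects)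

lemma obj_mem_localObjects (X : T) : R.L.obj X ∈ R.localObjects :=
  R.L.obj_mem_essImage X

variable {R}

lemma isIso_of_comp_eq {X X' X'' : T} {l : X ⟶ X'} {m : X ⟶ X''} {φ : X' ⟶ X''}
    (hl : R.localEquivalences l) (hm : R.localEquivalences m) (hX' : X' ∈ R.localObjects)
    (hX'' : X'' ∈ R.localObjects) (h : l ≫ φ = m) : IsIso φ :=
  (ObjectProperty.isLocal_iff_isIso _ φ hX' hX'').1
    (MorphismProperty.of_precomp _ l φ hl (h ▸ hm))

lemma IsReflection.localEquivalences_unit (hrefl : R.IsReflection) (X : T) :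
    R.localEquivalences (R.unit.app X) := fun _ hW =>
  ⟨fun _ g₂ h => (hrefl hW (R.unit.app X ≫ g₂)).unique h rfl, fun f => (hrefl hW f).exists⟩

lemma IsReflection.hom_ext (hrefl : R.IsReflection) {X W : T} (hW : W ∈ R.localObjects)
    {g₁ g₂ : R.L.obj X ⟶ W} (h : R.unit.app X ≫ g₁ = R.unit.app X ≫ g₂) : g₁ = g₂ :=
  (hrefl.localEquivalences_unit X W hW).1 h

lemma zero_mem_localObjects [HasZeroObject T] [HasZeroMorphisms T] [HasProducts.{v} T]
    (hprod : ClosedUnderProducts R.localObjects) :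
    (0 : T) ∈ R.localObjects := by
  refine Functor.essImage.ofIso ?_ (hprod (ι := PEmpty) PEmpty.elim PEmpty.rec)
  exact ⟨0, 0, Pi.hom_ext _ _ PEmpty.rec, (isZero_zero T).eq_of_src _ _⟩

end Category

section Triangulated

variable {T : Type u} [Category.{v} T] [HasZeroObject T] [Preadditive T] [HasShift T ℤ]
  [∀ n : ℤ, (shiftFunctor T n).Additive] [Pretriangulated T]
  [HasProducts.{v} T] {R : ReflectionData T}

lemma shift_neg_one_mem_localObjects (hsemi : IsSemicolocalizing R.localObjects) {X : T}
    (hX : X ∈ R.localObjects) : X⟦(-1 : ℤ)⟧ ∈ R.localObjects :=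
  hsemi.2.1 _ _ _ (rot_of_distTriang _ (contractible_distinguished (X⟦(-1 : ℤ)⟧)))
    (zero_mem_localObjects hsemi.1)
    (Functor.essImage.ofIso ((shiftFunctorCompIsoId T (-1 : ℤ) 1 (by simp)).app X).symm hX)

lemma IsReflection.localEquivalences_shift_unit (hrefl : R.IsReflection)
    (hsemi : IsSemicolocalizing R.localObjects) (X : T) :
    R.localEquivalences ((R.unit.app X)⟦(1 : ℤ)⟧') :=
  isLocal_map_of_adjunction (shiftEquiv T (1 : ℤ)).toAdjunction
    (fun _ hW => shift_neg_one_mem_localObjects hsemi hW) (hrefl.localEquivalences_unit X)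

lemma IsReflection.exists_shift_unit_comp (hrefl : R.IsReflection)
    (hsemi : IsSemicolocalizing R.localObjects) (X : T) :
    ∃ ν : (R.L.obj X)⟦(1 : ℤ)⟧ ⟶ R.L.obj (X⟦(1 : ℤ)⟧),
      (R.unit.app X)⟦(1 : ℤ)⟧' ≫ ν = R.unit.app (X⟦(1 : ℤ)⟧) :=
  (hrefl.localEquivalences_shift_unit hsemi X _ (R.obj_mem_localObjects _)).2 _

lemma IsReflection.isIso_of_shift_unit_comp (hrefl : R.IsReflection)
    (hsemi : IsSemicolocalizing R.localObjects)
    (hshift : ∀ ⦃X : T⦄, X ∈ R.localObjects → X⟦(1 : ℤ)⟧ ∈ R.localObjects) {X : T}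
    {ν : (R.L.obj X)⟦(1 : ℤ)⟧ ⟶ R.L.obj (X⟦(1 : ℤ)⟧)}
    (hν : (R.unit.app X)⟦(1 : ℤ)⟧' ≫ ν = R.unit.app (X⟦(1 : ℤ)⟧)) : IsIso ν :=
  isIso_of_comp_eq (hrefl.localEquivalences_shift_unit hsemi X)
    (hrefl.localEquivalences_unit _) (hshift (R.obj_mem_localObjects X))
    (R.obj_mem_localObjects _) hν

lemma IsReflection.map_distinguished (hrefl : R.IsReflection)
    (hsemi : IsSemicolocalizing R.localObjects)
    (hshift : ∀ ⦃X : T⦄, X ∈ R.localObjects → X⟦(1 : ℤ)⟧ ∈ R.localObjects) {X Y Z : T}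
    {u : X ⟶ Y} {v : Y ⟶ Z} {w : Z ⟶ X⟦(1 : ℤ)⟧} (hT : Triangle.mk u v w ∈ distTriang T)
    {ν : (R.L.obj X)⟦(1 : ℤ)⟧ ⟶ R.L.obj (X⟦(1 : ℤ)⟧)} [IsIso ν]
    (hν : (R.unit.app X)⟦(1 : ℤ)⟧' ≫ ν = R.unit.app (X⟦(1 : ℤ)⟧)) :
    Triangle.mk (R.L.map u) (R.L.map v) (R.L.map w ≫ inv ν) ∈ distTriang T := by
  obtain ⟨W, v', w', hT'⟩ := distinguished_cocone_triangle (R.L.map u)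
  obtain ⟨z : Z ⟶ W, hz₂ : v ≫ z = R.unit.app Y ≫ v',
      hz₃ : w ≫ (R.unit.app X)⟦(1 : ℤ)⟧' = z ≫ w'⟩ :=
    complete_distinguished_triangle_morphism _ _ hT hT' (R.unit.app X) (R.unit.app Y)
      (R.unit.naturality u)
  have hW : W ∈ R.localObjects := hsemi.2.2 _ _ _ (rot_of_distTriang _ hT')
    (R.obj_mem_localObjects Y) (hshift (R.obj_mem_localObjects X))
  have hz : R.localEquivalences z := isLocal_hom₃ hT hT'
    (Triangle.homMk _ _ (R.unit.app X) (R.unit.app Y) z (R.unit.naturality u) hz₂ hz₃) _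
    (hrefl.localEquivalences_unit X) (hrefl.localEquivalences_unit Y)
    (hrefl.localEquivalences_shift_unit hsemi X) (hrefl.localEquivalences_shift_unit hsemi Y)
  obtain ⟨φ, hφ : R.unit.app Z ≫ φ = z⟩ := (hrefl.localEquivalences_unit Z W hW).2 z
  have : IsIso φ :=
    isIso_of_comp_eq (hrefl.localEquivalences_unit Z) hz (R.obj_mem_localObjects Z) hW hφ
  have hν' : R.unit.app (X⟦(1 : ℤ)⟧) ≫ inv ν = (R.unit.app X)⟦(1 : ℤ)⟧' := by
    rw [← hν, assoc, IsIso.hom_inv_id, comp_id]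
  refine isomorphic_distinguished _ hT' _ (Triangle.isoMk _ _
    (Iso.refl _) (Iso.refl _) (asIso φ : R.L.obj Z ≅ W) (by simp [Triangle.mk]) ?_ ?_)
  · apply hrefl.hom_ext hW
    dsimp [Triangle.mk]
    rw [id_comp, ← hz₂, ← hφ]
    exact (R.unit.naturality_assoc v φ).symm
  · apply hrefl.hom_ext (hshift (R.obj_mem_localObjects X))
    dsimp [Triangle.mk]
    rw [CategoryTheory.Functor.map_id, comp_id, reassoc_of% hφ, ← hz₃, ← hν']
    exact (R.unit.naturality_assoc w (inv ν)).symm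

end Triangulated

end ReflectionData

section Statements

variable {T : Type u} [Category.{v} T] [HasZeroObject T] [Preadditive T] [HasShift T ℤ]
  [∀ n : ℤ, (shiftFunctor T n).Additive] [Pretriangulated T]
  [HasProducts.{v} T] [HasCoproducts.{v} T]

/-- For a semiexact reflection `L` on a triangulated category, the following are
equivalent: (i) `L` is exact; (ii) the `L`-local objects are closed under `Σ`;
(iii) `ΣLX ≅ LΣX` for all `X`; (iv) the canonical morphism `Σν_X : ΣLX ⟶ LΣX` (characterized by
`Σν_X ∘ Σl_X = l_{ΣX}`) is an isomorphism for all `X`; (v) `L` preserves all distinguished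
triangles (with third map `Σν_X⁻¹ ∘ Lw`). -/
theorem statement1 (R : ReflectionData T) (hrefl : R.IsReflection)
    (hsemi : IsSemicolocalizing R.localObjects) :
    List.TFAE [
      IsColocalizing R.localObjects,
      ∀ ⦃X : T⦄, X ∈ R.localObjects → X⟦(1:ℤ)⟧ ∈ R.localObjects,
      ∀ X : T, Nonempty ((R.L.obj X)⟦(1:ℤ)⟧ ≅ R.L.obj (X⟦(1:ℤ)⟧)),
      ∀ (X : T) (ν : (R.L.obj X)⟦(1:ℤ)⟧ ⟶ R.L.obj (X⟦(1:ℤ)⟧)),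
        (R.unit.app X)⟦(1:ℤ)⟧' ≫ ν = R.unit.app (X⟦(1:ℤ)⟧) → IsIso ν,
      ∀ ⦃X Y Z : T⦄ (u : X ⟶ Y) (v : Y ⟶ Z) (w : Z ⟶ X⟦(1:ℤ)⟧),
        (Triangle.mk u v w ∈ distTriang T) →
        ∃ (ν : (R.L.obj X)⟦(1:ℤ)⟧ ⟶ R.L.obj (X⟦(1:ℤ)⟧))
          (ν' : R.L.obj (X⟦(1:ℤ)⟧) ⟶ (R.L.obj X)⟦(1:ℤ)⟧),
          (R.unit.app X)⟦(1:ℤ)⟧' ≫ ν = R.unit.app (X⟦(1:ℤ)⟧) ∧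
          ν ≫ ν' = 𝟙 _ ∧ ν' ≫ ν = 𝟙 _ ∧
          Triangle.mk (R.L.map u) (R.L.map v) (R.L.map w ≫ ν') ∈ distTriang T
    ] := by
  tfae_have 1 ↔ 2 := hsemi.isColocalizing_iff (ReflectionData.zero_mem_localObjects hsemi.1)
  tfae_have 2 → 4 := fun hshift _ _ hν => hrefl.isIso_of_shift_unit_comp hsemi hshift hν
  tfae_have 4 → 3 := fun h4 X => by
    obtain ⟨ν, hν⟩ := hrefl.exists_shift_unit_comp hsemi X
    have := h4 X ν hν
    exact ⟨asIso ν⟩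
  tfae_have 3 → 2 := by
    rintro h3 X ⟨Y, ⟨e⟩⟩
    exact Functor.essImage.ofIso ((h3 Y).some.symm ≪≫ (shiftFunctor T (1 : ℤ)).mapIso e)
      (R.obj_mem_localObjects _)
  tfae_have 2 → 5 := fun hshift X Y Z u v w hT => by
    obtain ⟨ν, hν⟩ := hrefl.exists_shift_unit_comp hsemi X
    have := hrefl.isIso_of_shift_unit_comp hsemi hshift hν
    exact ⟨ν, inv ν, hν, IsIso.hom_inv_id ν, IsIso.inv_hom_id ν,
      hrefl.map_distinguished hsemi hshift hT hν⟩
  tfae_have 5 → 3 := fun h5 X => by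
    obtain ⟨ν, ν', -, hνν', hν'ν, -⟩ := h5 (𝟙 X) (0 : X ⟶ 0) 0 (contractible_distinguished X)
    exact ⟨⟨ν, ν', hνν', hν'ν⟩⟩
  tfae_finish

end Statements

end Paper
end

section
/- A coreflection C on a triangulated category T is semiexact (the class of C-colocal objects is semilocalizing) if and only if C preserves every distinguished triangle X → Y → Z → ΣX in which X is C-colocal, i.e., applying C and the counit yields a distinguished triangle CX → CY → CZ → ΣCX. -/
/-!
Write `c : C ⟶ 𝟭` for the counit. If the colocal objects are semilocalizing and `X` is colocal,
complete `C X → C Y` to a distinguished triangle `C X → C Y → W → (C X)⟦1⟧`; then `W` is colocal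
and the map `h : W → Z` extending `c X` and `c Y` to a morphism of triangles is bijective on
morphisms out of colocal objects, by a four-lemma chase against `X → Y → Z`. That chase needs `(c Y)⟦1⟧` to be injective
on such morphisms, which is where closure under extensions enters. Hence `W ≅ C Z` over `Z`.
Conversely, if `C` preserves these triangles, the counit is a morphism of distinguished
triangles, so it is an isomorphism at the third (resp. second) vertex as soon as it is at the
other two. Closure under coproducts holds for every coreflection.
-/

open CategoryTheory Category Limits Pretriangulated

universe v u

open Preadditive

namespace CategoryTheory

lemma Preadditive.bijective_rightComp_of_isIso {C : Type*} [Category C] [Preadditive C]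
    (A : C) {X Y : C} (f : X ⟶ Y) [IsIso f] : Function.Bijective (rightComp A f) :=
  ⟨fun _ _ h => (cancel_mono f).1 h,
    fun y => ⟨y ≫ inv f, by simp [rightComp]⟩⟩

namespace Pretriangulated

variable {C : Type*} [Category C] [HasZeroObject C] [Preadditive C] [HasShift C ℤ]
  [∀ n : ℤ, (CategoryTheory.shiftFunctor C n).Additive] [Pretriangulated C]
  {T T' : Triangle C} (φ : T ⟶ T') (hT : T ∈ distTriang C) (hT' : T' ∈ distTriang C) (A : C)
include hT hT'

lemma Triangle.surjective_rightComp_hom₃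
    (h₂ : Function.Surjective (rightComp A φ.hom₂))
    (h₁ : Function.Surjective (rightComp A (φ.hom₁⟦(1 : ℤ)⟧')))
    (h₂' : Function.Injective (rightComp A (φ.hom₂⟦(1 : ℤ)⟧'))) :
    Function.Surjective (rightComp A φ.hom₃) := by
  intro y₃
  obtain ⟨x₁, hx₁ : x₁ ≫ φ.hom₁⟦1⟧' = y₃ ≫ T'.mor₃⟩ := h₁ (y₃ ≫ T'.mor₃)
  obtain ⟨x₃, rfl⟩ := Triangle.coyoneda_exact₁ _ hT x₁ <|
    (injective_iff_map_eq_zero _).1 h₂' _ <| by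
      change (x₁ ≫ T.mor₁⟦1⟧') ≫ φ.hom₂⟦1⟧' = 0
      rw [assoc, ← Functor.map_comp, φ.comm₁, Functor.map_comp, reassoc_of% hx₁,
        comp_distTriang_mor_zero₃₁ _ hT', comp_zero]
  obtain ⟨y₂, hy₂⟩ := Triangle.coyoneda_exact₃ _ hT' (x₃ ≫ φ.hom₃ - y₃) <| by
    rw [sub_comp, assoc, ← φ.comm₃, ← assoc, hx₁, sub_self]
  obtain ⟨x₂, hx₂ : x₂ ≫ φ.hom₂ = y₂⟩ := h₂ y₂
  refine ⟨x₃ - x₂ ≫ T.mor₂, ?_⟩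
  change (x₃ - x₂ ≫ T.mor₂) ≫ φ.hom₃ = y₃
  rw [sub_comp, assoc, φ.comm₂, reassoc_of% hx₂, ← hy₂, sub_sub_cancel]

lemma Triangle.injective_rightComp_hom₃
    (h₁ : Function.Surjective (rightComp A φ.hom₁))
    (h₂ : Function.Injective (rightComp A φ.hom₂))
    (h₁' : Function.Injective (rightComp A (φ.hom₁⟦(1 : ℤ)⟧'))) :
    Function.Injective (rightComp A φ.hom₃) := by
  rw [injective_iff_map_eq_zero] at h₁' h₂ ⊢
  intro x₃ (hx₃ : x₃ ≫ φ.hom₃ = 0)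
  obtain ⟨x₂, rfl⟩ := Triangle.coyoneda_exact₃ _ hT x₃ <| h₁' _ <| by
    change (x₃ ≫ T.mor₃) ≫ φ.hom₁⟦1⟧' = 0
    rw [assoc, φ.comm₃, reassoc_of% hx₃, zero_comp]
  obtain ⟨y₁, hy₁⟩ := Triangle.coyoneda_exact₂ _ hT' (x₂ ≫ φ.hom₂) <| by
    rw [assoc, ← φ.comm₂, ← assoc, hx₃]
  obtain ⟨x₁, hx₁ : x₁ ≫ φ.hom₁ = y₁⟩ := h₁ y₁
  obtain rfl : x₂ = x₁ ≫ T.mor₁ := sub_eq_zero.1 <| h₂ _ <| by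
    change (x₂ - x₁ ≫ T.mor₁) ≫ φ.hom₂ = 0
    rw [sub_comp, hy₁, assoc, φ.comm₁, reassoc_of% hx₁, sub_self]
  rw [assoc, comp_distTriang_mor_zero₁₂ _ hT, comp_zero]

end Pretriangulated

end CategoryTheory

namespace Paper

namespace CoreflectionData

variable {T : Type u} [Category.{v} T] (Q : CoreflectionData T)

lemma obj_mem_colocalObjects (X : T) : Q.C.obj X ∈ Q.colocalObjects :=
  Q.C.obj_mem_essImage X

section Triangulated

variable [HasZeroObject T] [Preadditive T] [HasShift T ℤ]
  [∀ n : ℤ, (shiftFunctor T n).Additive] [Pretriangulated T]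

def PreservesColocalTriangles : Prop :=
  ∀ ⦃X Y Z : T⦄ (u : X ⟶ Y) (v : Y ⟶ Z) (w : Z ⟶ X⟦(1:ℤ)⟧),
    (Triangle.mk u v w ∈ distTriang T) → X ∈ Q.colocalObjects →
    ∃ w' : Q.C.obj Z ⟶ (Q.C.obj X)⟦(1:ℤ)⟧,
      w' ≫ (Q.counit.app X)⟦(1:ℤ)⟧' = Q.counit.app Z ≫ w ∧
      Triangle.mk (Q.C.map u) (Q.C.map v) w' ∈ distTriang T

end Triangulated

namespace IsCoreflection

variable {Q} (hQ : Q.IsCoreflection)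
include hQ

lemma hom_ext {W X : T} (hW : W ∈ Q.colocalObjects) {g₁ g₂ : W ⟶ Q.C.obj X}
    (h : g₁ ≫ Q.counit.app X = g₂ ≫ Q.counit.app X) : g₁ = g₂ :=
  (hQ hW _).unique h rfl

lemma isIso_counit_app_of_comp_eq_id {W : T} (s : W ⟶ Q.C.obj W)
    (hs : s ≫ Q.counit.app W = 𝟙 W) : IsIso (Q.counit.app W) :=
  ⟨s, hQ.hom_ext (Q.obj_mem_colocalObjects W) (by simp [hs]), hs⟩

lemma isIso_counit_app_iff {W : T} : IsIso (Q.counit.app W) ↔ W ∈ Q.colocalObjects := by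
  refine ⟨fun _ => ⟨W, ⟨asIso (Q.counit.app W)⟩⟩, fun hW => ?_⟩
  obtain ⟨s, hs, -⟩ := hQ hW (𝟙 W)
  exact hQ.isIso_counit_app_of_comp_eq_id s hs

lemma closedUnderCoproducts [HasCoproducts.{v} T] :
    ClosedUnderCoproducts Q.colocalObjects := by
  intro ι f hf
  choose g hg using fun i => (hQ (hf i) (Sigma.ι f i)).exists
  rw [← hQ.isIso_counit_app_iff]
  exact hQ.isIso_counit_app_of_comp_eq_id (Sigma.desc g) (by ext i; simp [hg])

section Preadditive

variable [Preadditive T]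

lemma bijective_rightComp_counit_app {A : T} (hA : A ∈ Q.colocalObjects) (X : T) :
    Function.Bijective (rightComp A (Q.counit.app X)) :=
  ⟨fun _ _ h => hQ.hom_ext hA h, fun f => (hQ hA f).exists⟩

lemma isIso_of_bijective_rightComp_comp_counit_app {W Z : T} (hW : W ∈ Q.colocalObjects)
    (k : W ⟶ Q.C.obj Z)
    (hk : ∀ A ∈ Q.colocalObjects, Function.Bijective (rightComp A (k ≫ Q.counit.app Z))) :
    IsIso k := by
  obtain ⟨s, hs : s ≫ k ≫ Q.counit.app Z = Q.counit.app Z⟩ :=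
    (hk _ (Q.obj_mem_colocalObjects Z)).2 (Q.counit.app Z)
  have hsk : s ≫ k = 𝟙 _ := hQ.hom_ext (Q.obj_mem_colocalObjects Z) (by simpa using hs)
  refine ⟨s, (hk W hW).1 ?_, hsk⟩
  change (k ≫ s) ≫ k ≫ Q.counit.app Z = 𝟙 W ≫ k ≫ Q.counit.app Z
  rw [assoc, reassoc_of% hsk, id_comp]

end Preadditive

section Triangulated

variable [HasZeroObject T] [Preadditive T] [HasShift T ℤ]
  [∀ n : ℤ, (shiftFunctor T n).Additive] [Pretriangulated T]

/-- A morphism `δ : A ⟶ (C Y)⟦1⟧` killed by the counit classifies an extension of `A` by `C Y`;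
that extension is colocal, so the counit of `Y` extends over it, which splits it. -/
lemma injective_rightComp_shift_map_counit_app (hext : ClosedUnderExtensions Q.colocalObjects)
    {A : T} (hA : A ∈ Q.colocalObjects) (Y : T) :
    Function.Injective (rightComp A ((Q.counit.app Y)⟦(1 : ℤ)⟧')) := by
  rw [injective_iff_map_eq_zero]
  intro δ (hδ : δ ≫ (Q.counit.app Y)⟦(1 : ℤ)⟧' = 0)
  obtain ⟨P, i, g, hTδ⟩ := distinguished_cocone_triangle₂ δ
  obtain ⟨(τ : P ⟶ Y), (hτ : i ≫ τ = Q.counit.app Y ≫ 𝟙 Y), -⟩ :=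
    complete_distinguished_triangle_morphism₂ _ _ hTδ (contractible_distinguished Y)
      (Q.counit.app Y) 0 (hδ.trans zero_comp.symm)
  obtain ⟨ρ, hρ, -⟩ := hQ (hext _ _ _ hTδ (Q.obj_mem_colocalObjects Y) hA) τ
  have hiρ : i ≫ ρ = 𝟙 _ :=
    hQ.hom_ext (Q.obj_mem_colocalObjects Y) (by rw [assoc, hρ, hτ]; simp)
  have hδi : δ ≫ i⟦(1 : ℤ)⟧' = 0 := comp_distTriang_mor_zero₃₁ _ hTδ
  rw [← comp_id δ, ← (shiftFunctor T (1 : ℤ)).map_id, ← hiρ, Functor.map_comp, ← assoc, hδi,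
    zero_comp]

lemma preservesColocalTriangles_of_closedUnderCofibres_of_closedUnderExtensions
    (hcof : ClosedUnderCofibres Q.colocalObjects) (hext : ClosedUnderExtensions Q.colocalObjects) :
    Q.PreservesColocalTriangles := by
  intro X Y Z u v w hT hX
  obtain ⟨W, j, δ, hTC⟩ := distinguished_cocone_triangle (Q.C.map u)
  have hW : W ∈ Q.colocalObjects := hcof _ _ _ hTC
    (Q.obj_mem_colocalObjects X) (Q.obj_mem_colocalObjects Y)
  obtain ⟨(h : W ⟶ Z), (hj : j ≫ h = Q.counit.app Y ≫ v),
      (hδ : δ ≫ (Q.counit.app X)⟦(1 : ℤ)⟧' = h ≫ w)⟩ :=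
    complete_distinguished_triangle_morphism _ _ hTC hT
    (Q.counit.app X) (Q.counit.app Y) (Q.counit.naturality u)
  let φ : Triangle.mk (Q.C.map u) j δ ⟶ Triangle.mk u v w :=
    Triangle.homMk _ _ (Q.counit.app X) (Q.counit.app Y) h (Q.counit.naturality u) hj hδ
  have : IsIso φ.hom₁ := hQ.isIso_counit_app_iff.2 hX
  obtain ⟨k, hk, -⟩ := hQ hW h
  have : IsIso k := hQ.isIso_of_bijective_rightComp_comp_counit_app hW k fun A hA => by
    rw [hk]
    exact ⟨Triangle.injective_rightComp_hom₃ φ hTC hT A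
        (bijective_rightComp_of_isIso A _).2 (hQ.bijective_rightComp_counit_app hA Y).1
        (bijective_rightComp_of_isIso A _).1,
      Triangle.surjective_rightComp_hom₃ φ hTC hT A
        (hQ.bijective_rightComp_counit_app hA Y).2 (bijective_rightComp_of_isIso A _).2
        (hQ.injective_rightComp_shift_map_counit_app hext hA Y)⟩
  have hjk : j ≫ k = Q.C.map v := hQ.hom_ext (Q.obj_mem_colocalObjects Y) <| by
    rw [assoc, hk, hj]
    exact (Q.counit.naturality v).symm
  refine ⟨inv k ≫ δ, ?_, isomorphic_distinguished _ hTC _ ?_⟩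
  · rw [assoc, hδ, ← hk, assoc, IsIso.inv_hom_id_assoc]
  · exact Triangle.isoMk _ _ (Iso.refl _) (Iso.refl _) (asIso k).symm
      ((comp_id _).trans (id_comp _).symm)
      ((by rw [← hjk, assoc, IsIso.hom_inv_id, comp_id] : Q.C.map v ≫ inv k = j).trans
        (id_comp _).symm)
      ((congrArg _ (CategoryTheory.Functor.map_id _ _)).trans (comp_id _))

lemma isSemilocalizing_of_preservesColocalTriangles [HasProducts.{v} T] [HasCoproducts.{v} T]
    (hpres : Q.PreservesColocalTriangles) : IsSemilocalizing Q.colocalObjects := by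
  refine ⟨hQ.closedUnderCoproducts, fun X Y Z u v w hT hX hY => ?_,
    fun X Y Z u v w hT hX hZ => ?_⟩
  · obtain ⟨w', hw', hT'⟩ := hpres u v w hT hX
    rw [← hQ.isIso_counit_app_iff] at hX hY ⊢
    exact isIso₃_of_isIso₁₂ (Triangle.homMk _ _ _ _ _ (Q.counit.naturality u)
      (Q.counit.naturality v) hw') hT' hT hX hY
  · obtain ⟨w', hw', hT'⟩ := hpres u v w hT hX
    rw [← hQ.isIso_counit_app_iff] at hX hZ ⊢
    exact isIso₂_of_isIso₁₃ (Triangle.homMk _ _ _ _ _ (Q.counit.naturality u)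
      (Q.counit.naturality v) hw') hT' hT hX hZ

end Triangulated

end IsCoreflection

end CoreflectionData

section Statements

variable {T : Type u} [Category.{v} T] [HasZeroObject T] [Preadditive T] [HasShift T ℤ]
  [∀ n : ℤ, (shiftFunctor T n).Additive] [Pretriangulated T]
  [HasProducts.{v} T] [HasCoproducts.{v} T]

/-- A coreflection `C` on a triangulated category is semiexact if and only if `C`
preserves every distinguished triangle `X → Y → Z → ΣX` in which `X` is `C`-colocal: applying
`C` and the counit yields a distinguished triangle `CX → CY → CZ → ΣCX`. -/
theorem statement3 (Q : CoreflectionData T) (hcorefl : Q.IsCoreflection) :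
    IsSemilocalizing Q.colocalObjects ↔
      ∀ ⦃X Y Z : T⦄ (u : X ⟶ Y) (v : Y ⟶ Z) (w : Z ⟶ X⟦(1:ℤ)⟧),
        (Triangle.mk u v w ∈ distTriang T) → X ∈ Q.colocalObjects →
        ∃ w' : Q.C.obj Z ⟶ (Q.C.obj X)⟦(1:ℤ)⟧,
          w' ≫ (Q.counit.app X)⟦(1:ℤ)⟧' = Q.counit.app Z ≫ w ∧
          Triangle.mk (Q.C.map u) (Q.C.map v) w' ∈ distTriang T :=
  ⟨fun ⟨_, hcof, hext⟩ =>
    hcorefl.preservesColocalTriangles_of_closedUnderCofibres_of_closedUnderExtensions hcof hext,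
    hcorefl.isSemilocalizing_of_preservesColocalTriangles⟩

end Statements

end Paper
end

section
/- Let D be any class of objects in a triangulated category T. Suppose that for each object X of T there is a distinguished triangle CX → X → LX → ΣCX with CX ∈ semiloc(D) and LX ∈ semiloc(D)⊿. Then semiloc(D) is coreflective, with a semiexact coreflection given by X ↦ CX: for every Y ∈ semiloc(D), the morphism CX → X induces a bijection T(Y, CX) ≅ T(Y, X). -/
open CategoryTheory Category Limits Pretriangulated

universe v u

namespace Paper

/-!
For `Y ∈ semiloc D`, applying `T(Y, -)` to the triangle `C X → X → B → (C X)⟦1⟧` gives an exact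
sequence `T(Y, B⟦-1⟧) → T(Y, C X) → T(Y, X) → T(Y, B)` whose outer terms vanish because
`B ∈ (semiloc D)⊿`. So `C X` represents `T(-, X)` on `semiloc D`, i.e. `X ↦ C X` is right adjoint
to the inclusion.
-/

section Coreflective

variable {T : Type u} [Category.{v} T]

theorem coreflectiveSet_of_bijective_comp {S : Set T} (C : T → T) (c : ∀ X : T, C X ⟶ X)
    (hC : ∀ X, C X ∈ S)
    (hc : ∀ (X : T) ⦃Y : T⦄, Y ∈ S → Function.Bijective (fun g : Y ⟶ C X => g ≫ c X)) :
    CoreflectiveSet S := by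
  refine Functor.isLeftAdjoint_of_rightAdjointObjIsDefined_eq_top (funext fun X => ?_)
  let e : (ObjectProperty.ι (fun X => X ∈ S)).op ⋙ yoneda.obj X |>.RepresentableBy
      (⟨C X, hC X⟩ : ObjectProperty.FullSubcategory (fun X => X ∈ S)) :=
    { homEquiv := fun {Y} =>
        (ObjectProperty.fullyFaithfulι _).homEquiv.trans (Equiv.ofBijective _ (hc X Y.property))
      homEquiv_comp := fun f g => by simp [Functor.FullyFaithful.homEquiv] }
  exact eq_true e.isRepresentable

end Coreflective

section Triangulated

variable {T : Type u} [Category.{v} T] [Preadditive T] [HasShift T ℤ]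
  [∀ n : ℤ, (shiftFunctor T n).Additive]

theorem hom_eq_zero_of_mem_rightSemiOrth {S : Set T} {B Y : T} (hB : B ∈ rightSemiOrth S)
    (hY : Y ∈ S) {n : ℤ} (hn : n ≤ 0) (f : Y ⟶ B⟦n⟧) : f = 0 := by
  have hshift : f⟦-n⟧' = 0 := by
    rw [← cancel_mono ((shiftFunctorCompIsoId T n (-n) (add_neg_cancel n)).hom.app B), zero_comp]
    exact hB hY (-n) (by omega) _
  exact (shiftFunctor T (-n)).map_injective (by rw [hshift, Functor.map_zero])

theorem bijective_comp_mor₁_of_distTriang [HasZeroObject T] [Pretriangulated T] {A X B Y : T}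
    {a : A ⟶ X} {b : X ⟶ B} {w : B ⟶ A⟦(1:ℤ)⟧} (hT : Triangle.mk a b w ∈ distTriang T)
    (hB : ∀ f : Y ⟶ B, f = 0) (hB' : ∀ f : Y ⟶ B⟦(-1:ℤ)⟧, f = 0) :
    Function.Bijective (fun g : Y ⟶ A => g ≫ a) := by
  constructor
  · rw [show (fun g : Y ⟶ A => g ≫ a) = Preadditive.rightComp Y a from rfl,
      injective_iff_map_eq_zero]
    intro g hg
    obtain ⟨h, rfl⟩ := Triangle.coyoneda_exact₂ _ (inv_rot_of_distTriang _ hT) g hg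
    exact (congrArg (· ≫ _) (hB' h)).trans zero_comp
  · intro f
    obtain ⟨g, hg⟩ := Triangle.coyoneda_exact₂ _ hT f (hB _)
    exact ⟨g, hg.symm⟩

theorem bijective_comp_mor₁_of_mem_rightSemiOrth [HasZeroObject T] [Pretriangulated T]
    {S : Set T} {A X B Y : T} {a : A ⟶ X} {b : X ⟶ B} {w : B ⟶ A⟦(1:ℤ)⟧}
    (hT : Triangle.mk a b w ∈ distTriang T) (hB : B ∈ rightSemiOrth S) (hY : Y ∈ S) :
    Function.Bijective (fun g : Y ⟶ A => g ≫ a) := by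
  refine bijective_comp_mor₁_of_distTriang hT (fun f => ?_)
    (hom_eq_zero_of_mem_rightSemiOrth hB hY (by norm_num))
  rw [← cancel_mono ((shiftFunctorZero T ℤ).inv.app B), zero_comp]
  exact hom_eq_zero_of_mem_rightSemiOrth hB hY le_rfl _

theorem isSemilocalizing_semiloc [HasZeroObject T] [Pretriangulated T] [HasProducts.{v} T]
    [HasCoproducts.{v} T] (D : Set T) : IsSemilocalizing (semiloc D) :=
  ⟨fun _ f hf S hS => hS.1.1 f fun i => hf i S hS,
    fun _ _ _ u v w hT hX hY S hS => hS.1.2.1 u v w hT (hX S hS) (hY S hS),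
    fun _ _ _ u v w hT hX hZ S hS => hS.1.2.2 u v w hT (hX S hS) (hZ S hS)⟩

end Triangulated

section Statements

variable {T : Type u} [Category.{v} T] [HasZeroObject T] [Preadditive T] [HasShift T ℤ]
  [∀ n : ℤ, (shiftFunctor T n).Additive] [Pretriangulated T]
  [HasProducts.{v} T] [HasCoproducts.{v} T]

/-- If for each object `X` there is a distinguished triangle `CX → X → LX → ΣCX`
with `CX ∈ semiloc(D)` and `LX ∈ semiloc(D)⊿`, then `semiloc(D)` is coreflective, with a
semiexact coreflection given by `X ↦ CX`: for every `Y ∈ semiloc(D)`, composition with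
`CX → X` is a bijection `T(Y, CX) ≅ T(Y, X)`. -/
theorem statement10 (D : Set T) (C : T → T) (c : ∀ X : T, C X ⟶ X)
    (htri : ∀ X : T, ∃ (B : T) (b : X ⟶ B) (w : B ⟶ (C X)⟦(1:ℤ)⟧),
        (Triangle.mk (c X) b w ∈ distTriang T) ∧
        C X ∈ semiloc D ∧ B ∈ rightSemiOrth (semiloc D)) :
    CoreflectiveSet (semiloc D) ∧ IsSemilocalizing (semiloc D) ∧
    ∀ (X : T) ⦃Y : T⦄, Y ∈ semiloc D →
      Function.Bijective (fun g : Y ⟶ C X => g ≫ c X) := by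
  have hC : ∀ X, C X ∈ semiloc D := fun X => by
    obtain ⟨-, -, -, -, hCX, -⟩ := htri X
    exact hCX
  have hc : ∀ (X : T) ⦃Y : T⦄, Y ∈ semiloc D →
      Function.Bijective (fun g : Y ⟶ C X => g ≫ c X) := fun X Y hY => by
    obtain ⟨B, b, w, hT, -, hB⟩ := htri X
    exact bijective_comp_mor₁_of_mem_rightSemiOrth hT hB hY
  exact ⟨coreflectiveSet_of_bijective_comp C c hC hc, isSemilocalizing_semiloc D, hc⟩

end Statements

end Paper
end

section
/- In a triangulated category T with products and coproducts, a full subcategory C is coreflective and semilocalizing if and only if the pair (C, C⊿) is a torsion pair, i.e.: T(A, B) = 0 for all A ∈ C and B ∈ C⊿; ΣC ⊆ C; and every object X of T fits into a distinguished triangle A → X → B → ΣA with A ∈ C and B ∈ C⊿. Moreover, if (X, Y) is any torsion pair in T (meaning T(A,B) = 0 for A ∈ X, B ∈ Y, ΣX ⊆ X, and every object sits in a distinguished triangle with first term in X and third term in Y, with X and Y closed under retracts), then X is coreflective and semilocalizing while Y is reflective and semicolocalizing. -/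
/-!
If `(X, Y)` is a torsion pair, the triangle `A → Z → B → A⟦1⟧` of an object `Z` is at once an
`X`-coreflection `A → Z` and a `Y`-reflection `Z → B`: the long exact Hom sequences, together
with `ΣX ⊆ X`, show that maps from `X` lift uniquely along `A → Z` and maps to `Y` factor
uniquely through `Z → B`. The same triangles show that `X` and `Y` are each other's
Hom-orthogonals, and Hom-orthogonals are closed under (co)products, extensions and, again by
`ΣX ⊆ X`, cofibres resp. fibres.

Conversely, let `C` be coreflective and semilocalizing and complete a coreflection `A → Z` to a
triangle `A → Z → B → A⟦1⟧`. For `E ∈ C` and `g : E ⟶ B`, the extension `F` of `E` by `A` along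
`g ≫ w` lies in `C`; lifting `F → Z` along `A → Z` splits `A → F`, which kills `g ≫ w`. So `g`
factors through `Z`, hence through `A`, and vanishes. As `C` is closed under nonnegative shifts,
this puts `B` in `C⊿`.
-/

open CategoryTheory Category Limits Pretriangulated

universe v u

namespace Paper

section Coreflection

variable {T : Type u} [Category.{v} T]

def HasUniqueLifts (S : Set T) {A Z : T} (a : A ⟶ Z) : Prop :=
  ∀ ⦃E : T⦄, E ∈ S → ∀ f : E ⟶ Z, ∃! g : E ⟶ A, g ≫ a = f

def HasUniqueDescs (S : Set T) {Z B : T} (b : Z ⟶ B) : Prop :=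
  ∀ ⦃E : T⦄, E ∈ S → ∀ f : Z ⟶ E, ∃! g : B ⟶ E, b ≫ g = f

lemma rightAdjointObjIsDefined_ι_iff (S : Set T) (Z : T) :
    (ObjectProperty.ι (fun X => X ∈ S)).rightAdjointObjIsDefined Z ↔
      ∃ (A : T) (a : A ⟶ Z), A ∈ S ∧ HasUniqueLifts S a := by
  constructor
  · rintro ⟨⟨⟨A, hA⟩, ⟨R⟩⟩⟩
    refine ⟨A, R.homEquiv (𝟙 _), hA, fun E hE f => ?_⟩
    have hR (g : (⟨E, hE⟩ : ObjectProperty.FullSubcategory (· ∈ S)) ⟶ ⟨A, hA⟩) :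
        R.homEquiv g = g.hom ≫ R.homEquiv (𝟙 _) := R.homEquiv_eq g
    refine ⟨((R.homEquiv (X := ⟨E, hE⟩)).symm f).hom, ?_, fun g hg => ?_⟩
    · exact (hR _).symm.trans ((R.homEquiv (X := ⟨E, hE⟩)).apply_symm_apply f)
    · rw [← (hR (ObjectProperty.homMk g)).trans hg, Equiv.symm_apply_apply]
      rfl
  · rintro ⟨A, a, hA, ha⟩
    have hbij (E : ObjectProperty.FullSubcategory (· ∈ S)) :
        Function.Bijective (fun g : E ⟶ ⟨A, hA⟩ => g.hom ≫ a) := by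
      refine ⟨fun g g' h => ObjectProperty.hom_ext _ ((ha E.property _).unique h rfl), fun f => ?_⟩
      obtain ⟨g, hg, -⟩ := ha E.property f
      exact ⟨ObjectProperty.homMk g, hg⟩
    exact ⟨⟨⟨A, hA⟩, ⟨{ homEquiv := Equiv.ofBijective _ (hbij _), homEquiv_comp := by simp }⟩⟩⟩

lemma leftAdjointObjIsDefined_ι_of_hasUniqueDescs {S : Set T} {Z B : T} (b : Z ⟶ B)
    (hB : B ∈ S) (hb : HasUniqueDescs S b) :
    (ObjectProperty.ι (fun X => X ∈ S)).leftAdjointObjIsDefined Z := by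
  have hbij (E : ObjectProperty.FullSubcategory (· ∈ S)) :
      Function.Bijective (fun g : (⟨B, hB⟩ : ObjectProperty.FullSubcategory (· ∈ S)) ⟶ E =>
        b ≫ g.hom) := by
    refine ⟨fun g g' h => ObjectProperty.hom_ext _ ((hb E.property _).unique h rfl), fun f => ?_⟩
    obtain ⟨g, hg, -⟩ := hb E.property f
    exact ⟨ObjectProperty.homMk g, hg⟩
  exact ⟨⟨⟨B, hB⟩, ⟨{ homEquiv := Equiv.ofBijective _ (hbij _), homEquiv_comp := by simp }⟩⟩⟩

lemma coreflectiveSet_iff (S : Set T) :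
    CoreflectiveSet S ↔ ∀ Z : T, ∃ (A : T) (a : A ⟶ Z), A ∈ S ∧ HasUniqueLifts S a := by
  rw [CoreflectiveSet, Functor.isLeftAdjoint_iff_rightAdjointObjIsDefined_eq_top]
  simp only [← rightAdjointObjIsDefined_ι_iff, funext_iff, Pi.top_apply, Prop.top_eq_true,
    eq_iff_iff, iff_true]

lemma reflectiveSet_of_forall_hasUniqueDescs (S : Set T)
    (h : ∀ Z : T, ∃ (B : T) (b : Z ⟶ B), B ∈ S ∧ HasUniqueDescs S b) : ReflectiveSet S := by
  refine Functor.isRightAdjoint_of_leftAdjointObjIsDefined_eq_top (funext fun Z => ?_)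
  obtain ⟨B, b, hB, hb⟩ := h Z
  simpa using leftAdjointObjIsDefined_ι_of_hasUniqueDescs b hB hb

lemma closedUnderRetracts_of_coreflectiveSet {S : Set T} (hS : CoreflectiveSet S)
    (hiso : ∀ ⦃A B : T⦄, (A ≅ B) → A ∈ S → B ∈ S) : ClosedUnderRetracts S := by
  rintro P Q hP ⟨i, r, hir⟩
  obtain ⟨A, a, hA, ha⟩ := (coreflectiveSet_iff S).1 hS Q
  obtain ⟨r', hr', -⟩ := ha hP r
  have hsection : (i ≫ r') ≫ a = 𝟙 Q := by rw [assoc, hr', hir]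
  refine hiso ⟨a, i ≫ r', (ha hA a).unique ?_ (id_comp a), hsection⟩ hA
  rw [assoc, hsection, comp_id]

end Coreflection

section HomOrthogonal

variable {T : Type u} [Category.{v} T]

section

variable [HasZeroMorphisms T]

def leftHomOrth (Y : Set T) : Set T := {A | ∀ ⦃B : T⦄, B ∈ Y → ∀ f : A ⟶ B, f = 0}

def rightHomOrth (X : Set T) : Set T := {B | ∀ ⦃A : T⦄, A ∈ X → ∀ f : A ⟶ B, f = 0}

lemma closedUnderRetracts_rightHomOrth (X : Set T) : ClosedUnderRetracts (rightHomOrth X) := by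
  rintro P Q hP ⟨i, r, hir⟩ A hA f
  calc f = (f ≫ i) ≫ r := by rw [assoc, hir, comp_id]
    _ = 0 := by rw [hP hA (f ≫ i), zero_comp]

end

lemma rightSemiOrth_eq_rightHomOrth [Preadditive T] [HasShift T ℤ] {S : Set T}
    (hS : ∀ ⦃E : T⦄, E ∈ S → ∀ k : ℤ, 0 ≤ k → E⟦k⟧ ∈ S) : rightSemiOrth S = rightHomOrth S := by
  ext B
  refine ⟨fun hB E hE f => ?_, fun hB E hE k hk f => hB (hS hE k hk) f⟩
  rw [← cancel_epi ((shiftFunctorZero T ℤ).hom.app E), comp_zero]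
  exact hB hE 0 le_rfl _

end HomOrthogonal

section Pretriangulated

variable {T : Type u} [Category.{v} T] [HasZeroObject T] [Preadditive T] [HasShift T ℤ]
  [∀ n : ℤ, (shiftFunctor T n).Additive] [Pretriangulated T]

open ZeroObject

namespace ClosedUnderCofibres

variable {S : Set T}

lemma zero_mem (hS : ClosedUnderCofibres S) {A : T} (hA : A ∈ S) : (0 : T) ∈ S :=
  hS _ _ _ (contractible_distinguished A) hA hA

lemma mem_of_iso (hS : ClosedUnderCofibres S) {A B : T} (e : A ≅ B) (hA : A ∈ S) : B ∈ S := by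
  refine hS (0 : 0 ⟶ A) e.hom 0 ?_ (hS.zero_mem hA) hA
  refine isomorphic_distinguished _ (contractible_distinguished₁ A) _ ?_
  exact Triangle.isoMk _ _ (Iso.refl _) (Iso.refl _) e.symm ((comp_id _).trans (id_comp _).symm)
    (e.hom_inv_id.trans (id_comp _).symm) (zero_comp.trans comp_zero.symm)

lemma shift_one_mem (hS : ClosedUnderCofibres S) {A : T} (hA : A ∈ S) : A⟦(1:ℤ)⟧ ∈ S :=
  hS _ _ _ (contractible_distinguished₂ A) hA (hS.zero_mem hA)

lemma shift_mem (hS : ClosedUnderCofibres S) {A : T} (hA : A ∈ S) {k : ℤ} (hk : 0 ≤ k) :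
    A⟦k⟧ ∈ S := by
  induction k, hk using Int.leInduction with
  | base => exact hS.mem_of_iso ((shiftFunctorZero T ℤ).app A).symm hA
  | succ n _ ih => exact hS.mem_of_iso ((shiftFunctorAdd T n 1).app A).symm (hS.shift_one_mem ih)

end ClosedUnderCofibres

lemma eq_zero_of_comp_mor₁_eq_zero {Tr : Triangle T} (hT : Tr ∈ distTriang T) {E : T}
    {f : E ⟶ Tr.obj₁} (hf : f ≫ Tr.mor₁ = 0) (h : ∀ g : E⟦(1:ℤ)⟧ ⟶ Tr.obj₃, g = 0) : f = 0 := by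
  apply (shiftFunctor T (1:ℤ)).map_injective
  obtain ⟨g, hg⟩ := Tr.coyoneda_exact₁ hT (f⟦(1:ℤ)⟧')
    (by rw [← Functor.map_comp, hf, Functor.map_zero])
  rw [hg, h g, zero_comp, Functor.map_zero]

lemma hasUniqueLifts_mor₁ {S : Set T} {Tr : Triangle T} (hT : Tr ∈ distTriang T)
    (h₀ : ∀ ⦃E : T⦄, E ∈ S → ∀ g : E ⟶ Tr.obj₃, g = 0)
    (h₁ : ∀ ⦃E : T⦄, E ∈ S → ∀ g : E⟦(1:ℤ)⟧ ⟶ Tr.obj₃, g = 0) : HasUniqueLifts S Tr.mor₁ := by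
  intro E hE f
  obtain ⟨g, hg⟩ := Tr.coyoneda_exact₂ hT f (h₀ hE _)
  refine ⟨g, hg.symm, fun g' hg' => ?_⟩
  rw [← sub_eq_zero]
  exact eq_zero_of_comp_mor₁_eq_zero hT (by rw [Preadditive.sub_comp, hg', hg, sub_self]) (h₁ hE)

lemma hasUniqueDescs_mor₂ {S : Set T} {Tr : Triangle T} (hT : Tr ∈ distTriang T)
    (h₀ : ∀ ⦃E : T⦄, E ∈ S → ∀ g : Tr.obj₁ ⟶ E, g = 0)
    (h₁ : ∀ ⦃E : T⦄, E ∈ S → ∀ g : Tr.obj₁⟦(1:ℤ)⟧ ⟶ E, g = 0) : HasUniqueDescs S Tr.mor₂ := by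
  intro E hE f
  obtain ⟨g, hg⟩ := Tr.yoneda_exact₂ hT f (h₀ hE _)
  refine ⟨g, hg.symm, fun g' hg' => ?_⟩
  rw [← sub_eq_zero]
  obtain ⟨t, ht⟩ := Tr.yoneda_exact₃ hT (g' - g) (by rw [Preadditive.comp_sub, hg', hg, sub_self])
  rw [ht, h₁ hE t, comp_zero]

lemma comp_mor₃_eq_zero_of_hasUniqueLifts {S : Set T} (hS : ClosedUnderExtensions S)
    {Tr : Triangle T} (hT : Tr ∈ distTriang T) (h₁ : Tr.obj₁ ∈ S) (ha : HasUniqueLifts S Tr.mor₁)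
    {E : T} (hE : E ∈ S) (g : E ⟶ Tr.obj₃) : g ≫ Tr.mor₃ = 0 := by
  obtain ⟨F, i, p, hF⟩ := distinguished_cocone_triangle₂ (g ≫ Tr.mor₃)
  obtain ⟨h, hih, -⟩ := complete_distinguished_triangle_morphism₂ _ Tr hF hT (𝟙 _) g
    ((congrArg _ ((shiftFunctor T (1:ℤ)).map_id _)).trans (comp_id _))
  obtain ⟨h', hh', -⟩ := ha (hS _ _ _ hF h₁ hE) h
  have hsplit : i ≫ h' = 𝟙 _ :=
    (ha h₁ Tr.mor₁).unique (by rw [assoc, hh']; exact hih.trans (id_comp _)) (id_comp _)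
  calc g ≫ Tr.mor₃ = ((g ≫ Tr.mor₃) ≫ i⟦(1:ℤ)⟧') ≫ h'⟦(1:ℤ)⟧' := by
        rw [assoc, ← (shiftFunctor T (1:ℤ)).map_comp, hsplit, (shiftFunctor T (1:ℤ)).map_id,
          comp_id]
    _ = 0 := by rw [show (g ≫ Tr.mor₃) ≫ i⟦(1:ℤ)⟧' = 0 from comp_distTriang_mor_zero₃₁ _ hF,
      zero_comp]

lemma obj₃_mem_rightHomOrth_of_hasUniqueLifts {S : Set T} (hS : ClosedUnderExtensions S)
    {Tr : Triangle T} (hT : Tr ∈ distTriang T) (h₁ : Tr.obj₁ ∈ S) (ha : HasUniqueLifts S Tr.mor₁) :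
    Tr.obj₃ ∈ rightHomOrth S := by
  intro E hE g
  obtain ⟨d, rfl⟩ :=
    Tr.coyoneda_exact₃ hT g (comp_mor₃_eq_zero_of_hasUniqueLifts hS hT h₁ ha hE g)
  obtain ⟨d', rfl, -⟩ := ha hE d
  rw [assoc, comp_distTriang_mor_zero₁₂ _ hT, comp_zero]

lemma closedUnderExtensions_leftHomOrth (Y : Set T) : ClosedUnderExtensions (leftHomOrth Y) := by
  intro P Q R u v w hT hP hR B hB g
  obtain ⟨t, ht⟩ := Triangle.yoneda_exact₂ _ hT g (hP hB _)
  rw [ht, hR hB t]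
  exact comp_zero

lemma closedUnderCofibres_leftHomOrth {Y : Set T}
    (hY : ∀ ⦃A : T⦄, A ∈ leftHomOrth Y → A⟦(1:ℤ)⟧ ∈ leftHomOrth Y) :
    ClosedUnderCofibres (leftHomOrth Y) := by
  intro P Q R u v w hT hP hQ B hB g
  obtain ⟨t, ht⟩ := Triangle.yoneda_exact₃ _ hT g (hQ hB _)
  rw [ht, hY hP hB t]
  exact comp_zero

lemma closedUnderExtensions_rightHomOrth (X : Set T) : ClosedUnderExtensions (rightHomOrth X) := by
  intro P Q R u v w hT hP hR A hA g
  obtain ⟨t, ht⟩ := Triangle.coyoneda_exact₂ _ hT g (hR hA _)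
  rw [ht, hP hA t]
  exact zero_comp

lemma closedUnderFibres_rightHomOrth {X : Set T} (hX : ∀ ⦃A : T⦄, A ∈ X → A⟦(1:ℤ)⟧ ∈ X) :
    ClosedUnderFibres (rightHomOrth X) := by
  intro P Q R u v w hT hQ hR A hA g
  exact eq_zero_of_comp_mor₁_eq_zero hT (hQ hA _) (hR (hX hA))

lemma isSemilocalizing_leftHomOrth [HasCoproducts.{v} T] {Y : Set T}
    (hY : ∀ ⦃A : T⦄, A ∈ leftHomOrth Y → A⟦(1:ℤ)⟧ ∈ leftHomOrth Y) :
    IsSemilocalizing (leftHomOrth Y) := by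
  refine ⟨fun ι f hf B hB g => ?_, closedUnderCofibres_leftHomOrth hY,
    closedUnderExtensions_leftHomOrth Y⟩
  exact Sigma.hom_ext _ _ fun i => by rw [comp_zero]; exact hf i hB _

lemma isSemicolocalizing_rightHomOrth [HasProducts.{v} T] {X : Set T}
    (hX : ∀ ⦃A : T⦄, A ∈ X → A⟦(1:ℤ)⟧ ∈ X) :
    IsSemicolocalizing (rightHomOrth X) := by
  refine ⟨fun ι f hf A hA g => ?_, closedUnderFibres_rightHomOrth hX,
    closedUnderExtensions_rightHomOrth X⟩
  exact Pi.hom_ext _ _ fun i => by rw [zero_comp]; exact hf i hA _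

end Pretriangulated

section Statements

variable {T : Type u} [Category.{v} T] [HasZeroObject T] [Preadditive T] [HasShift T ℤ]
  [∀ n : ℤ, (shiftFunctor T n).Additive] [Pretriangulated T]
  [HasProducts.{v} T] [HasCoproducts.{v} T]

/-- A torsion pair `(X, Y)`: both classes are closed under retracts, all morphisms from `X` to
`Y` vanish, `X` is closed under suspension, and every object fits in a distinguished triangle
with first term in `X` and third term in `Y`. -/
def IsTorsionPair (X Y : Set T) : Prop :=
  ClosedUnderRetracts X ∧ ClosedUnderRetracts Y ∧
  (∀ ⦃A : T⦄, A ∈ X → ∀ ⦃B : T⦄, B ∈ Y → ∀ f : A ⟶ B, f = 0) ∧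
  (∀ ⦃A : T⦄, A ∈ X → A⟦(1:ℤ)⟧ ∈ X) ∧
  (∀ Z : T, ∃ (A B : T) (a : A ⟶ Z) (b : Z ⟶ B) (w : B ⟶ A⟦(1:ℤ)⟧),
      (Triangle.mk a b w ∈ distTriang T) ∧ A ∈ X ∧ B ∈ Y)

end Statements

section TorsionPair

variable {T : Type u} [Category.{v} T] [HasZeroObject T] [Preadditive T] [HasShift T ℤ]
  [∀ n : ℤ, (shiftFunctor T n).Additive] [Pretriangulated T]

namespace IsTorsionPair

variable {X Y : Set T}

lemma leftHomOrth_eq (h : IsTorsionPair X Y) : leftHomOrth Y = X := by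
  obtain ⟨hX, -, hXY, -, htri⟩ := h
  ext Z
  refine ⟨fun hZ => ?_, fun hZ B hB f => hXY hZ hB f⟩
  obtain ⟨A, B, a, b, w, hT, hA, hB⟩ := htri Z
  obtain ⟨s, hs⟩ := Triangle.coyoneda_exact₂ _ hT (𝟙 Z) (by rw [hZ hB b]; exact comp_zero)
  exact hX hA ⟨s, a, hs.symm⟩

lemma rightHomOrth_eq (h : IsTorsionPair X Y) : rightHomOrth X = Y := by
  obtain ⟨-, hY, hXY, -, htri⟩ := h
  ext Z
  refine ⟨fun hZ => ?_, fun hZ A hA f => hXY hA hZ f⟩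
  obtain ⟨A, B, a, b, w, hT, hA, hB⟩ := htri Z
  obtain ⟨s, hs⟩ := Triangle.yoneda_exact₂ _ hT (𝟙 Z) (by rw [hZ hA a]; exact zero_comp)
  exact hY hB ⟨b, s, hs.symm⟩

lemma coreflectiveSet (h : IsTorsionPair X Y) : CoreflectiveSet X := by
  obtain ⟨-, -, hXY, hshift, htri⟩ := h
  refine (coreflectiveSet_iff X).2 fun Z => ?_
  obtain ⟨A, B, a, b, w, hT, hA, hB⟩ := htri Z
  exact ⟨A, a, hA, hasUniqueLifts_mor₁ hT (fun E hE => hXY hE hB)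
    (fun E hE => hXY (hshift hE) hB)⟩

lemma reflectiveSet (h : IsTorsionPair X Y) : ReflectiveSet Y := by
  obtain ⟨-, -, hXY, hshift, htri⟩ := h
  refine reflectiveSet_of_forall_hasUniqueDescs Y fun Z => ?_
  obtain ⟨A, B, a, b, w, hT, hA, hB⟩ := htri Z
  exact ⟨B, b, hB, hasUniqueDescs_mor₂ hT (fun E hE => hXY hA hE)
    (fun E hE => hXY (hshift hA) hE)⟩

lemma isSemilocalizing [HasCoproducts.{v} T] (h : IsTorsionPair X Y) : IsSemilocalizing X := by
  have hshift : ∀ ⦃A : T⦄, A ∈ X → A⟦(1:ℤ)⟧ ∈ X := h.2.2.2.1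
  rw [← h.leftHomOrth_eq] at hshift ⊢
  exact isSemilocalizing_leftHomOrth hshift

lemma isSemicolocalizing [HasProducts.{v} T] (h : IsTorsionPair X Y) : IsSemicolocalizing Y := by
  rw [← h.rightHomOrth_eq]
  exact isSemicolocalizing_rightHomOrth h.2.2.2.1

end IsTorsionPair

lemma isTorsionPair_rightSemiOrth [HasCoproducts.{v} T] {C : Set T} (hC : CoreflectiveSet C)
    (hsemi : IsSemilocalizing C) : IsTorsionPair C (rightSemiOrth C) := by
  obtain ⟨-, hcof, hext⟩ := hsemi
  rw [rightSemiOrth_eq_rightHomOrth fun E hE k hk => hcof.shift_mem hE hk]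
  refine ⟨closedUnderRetracts_of_coreflectiveSet hC fun _ _ => hcof.mem_of_iso,
    closedUnderRetracts_rightHomOrth C, fun A hA B hB f => hB hA f,
    fun _ => hcof.shift_one_mem, fun Z => ?_⟩
  obtain ⟨A, a, hA, ha⟩ := (coreflectiveSet_iff C).1 hC Z
  obtain ⟨B, b, w, hT⟩ := distinguished_cocone_triangle a
  exact ⟨A, B, a, b, w, hT, hA, obj₃_mem_rightHomOrth_of_hasUniqueLifts hext hT hA ha⟩

end TorsionPair

section Statements

variable {T : Type u} [Category.{v} T] [HasZeroObject T] [Preadditive T] [HasShift T ℤ]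
  [∀ n : ℤ, (shiftFunctor T n).Additive] [Pretriangulated T]
  [HasProducts.{v} T] [HasCoproducts.{v} T]

/-- A full subcategory `C` is coreflective and semilocalizing if and only if
`(C, C⊿)` is a torsion pair; moreover, for any torsion pair `(X, Y)`, the class `X` is
coreflective and semilocalizing while `Y` is reflective and semicolocalizing. -/
theorem statement11 :
    (∀ C : Set T, (CoreflectiveSet C ∧ IsSemilocalizing C) ↔
        IsTorsionPair C (rightSemiOrth C)) ∧
    (∀ X Y : Set T, IsTorsionPair X Y →
        CoreflectiveSet X ∧ IsSemilocalizing X ∧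
        ReflectiveSet Y ∧ IsSemicolocalizing Y) :=
  ⟨fun _ => ⟨fun ⟨hC, hsemi⟩ => isTorsionPair_rightSemiOrth hC hsemi,
      fun h => ⟨h.coreflectiveSet, h.isSemilocalizing⟩⟩,
    fun _ _ h => ⟨h.coreflectiveSet, h.isSemilocalizing, h.reflectiveSet, h.isSemicolocalizing⟩⟩

end Statements

end Paper
end
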